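/- arXiv:2402.17201 — 2 statements merged into one kernel-verified Lean document; each statement's English description precedes it below -/
import Mathlib

section
/- Let D : ℝ → ℝ be strictly decreasing with clearing prices defined as in the four-threshold policy: for r ≤ σ₁, z*(r) = z̄; for σ₁ < r < σ₂, z*(r) = D(π⁺) - r; for σ₂ ≤ r ≤ σ₃, z*(r) = 0; for σ₃ < r < σ₄, z*(r) = D(π⁻) - r; for r ≥ σ₄, z*(r) = z̲, where σ₂ = D(π⁺), σ₃ = D(π⁻), σ₁ = σ₂ - z̄, σ₄ = σ₃ - z̲, z̄ ≥ 0 ≥ z̲, π⁺ ≥ π⁻. Then z* : ℝ → ℝ is monotone nonincreasing and satisfies z̲ ≤ z*(r) ≤ z̄ for all r. -/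
/-!
Writing `u(r) = max 0 (σ₂ - r) + min 0 (σ₃ - r)` for the net consumption the community would
choose without envelopes (import below `σ₂`, balance on the dead band `[σ₂, σ₃]`, export above
`σ₃`), the five cases of the policy say exactly that `z*(r)` is `u(r)` clamped to `[z̲, z̄]`.
Both ramps in `u` are nonincreasing and clamping is monotone, so `z*` is nonincreasing, and a
clamped value lies in the envelope.
-/

def deadBandNetDemand (σ₂ σ₃ r : ℝ) : ℝ := max 0 (σ₂ - r) + min 0 (σ₃ - r)

def clampIcc (a b x : ℝ) : ℝ := max a (min b x)

section DeadBand

variable {σ₂ σ₃ r : ℝ}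

theorem antitone_deadBandNetDemand (σ₂ σ₃ : ℝ) : Antitone (deadBandNetDemand σ₂ σ₃) := by
  intro r s hrs
  unfold deadBandNetDemand
  gcongr

theorem deadBandNetDemand_of_le_left (h : σ₂ ≤ σ₃) (hr : r ≤ σ₂) :
    deadBandNetDemand σ₂ σ₃ r = σ₂ - r := by
  unfold deadBandNetDemand
  rw [max_eq_right (by linarith), min_eq_left (by linarith), add_zero]

theorem deadBandNetDemand_of_mem_Icc (hr₂ : σ₂ ≤ r) (hr₃ : r ≤ σ₃) :
    deadBandNetDemand σ₂ σ₃ r = 0 := by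
  unfold deadBandNetDemand
  rw [max_eq_left (by linarith), min_eq_left (by linarith), add_zero]

theorem deadBandNetDemand_of_right_le (h : σ₂ ≤ σ₃) (hr : σ₃ ≤ r) :
    deadBandNetDemand σ₂ σ₃ r = σ₃ - r := by
  unfold deadBandNetDemand
  rw [max_eq_left (by linarith), min_eq_right (by linarith), zero_add]

end DeadBand

section Clamp

variable {a b x : ℝ}

theorem monotone_clampIcc (a b : ℝ) : Monotone (clampIcc a b) := by
  intro x y hxy
  unfold clampIcc
  gcongr

theorem clampIcc_mem_Icc (hab : a ≤ b) (x : ℝ) : clampIcc a b x ∈ Set.Icc a b :=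
  ⟨le_max_left _ _, max_le hab (min_le_left _ _)⟩

theorem clampIcc_of_mem_Icc (ha : a ≤ x) (hb : x ≤ b) : clampIcc a b x = x := by
  rw [clampIcc, min_eq_right hb, max_eq_right ha]

theorem clampIcc_of_le_left (hab : a ≤ b) (hx : x ≤ a) : clampIcc a b x = a := by
  rw [clampIcc, min_eq_right (hx.trans hab), max_eq_left hx]

theorem clampIcc_of_right_le (hab : a ≤ b) (hx : b ≤ x) : clampIcc a b x = b := by
  rw [clampIcc, min_eq_left hx, max_eq_right hab]

end Clamp

theorem eq_clampIcc_deadBandNetDemand {σ₁ σ₂ σ₃ σ₄ zbar zlow : ℝ} {zstar : ℝ → ℝ}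
    (hσ₂₃ : σ₂ ≤ σ₃) (hσ₁ : σ₁ = σ₂ - zbar) (hσ₄ : σ₄ = σ₃ - zlow)
    (hzbar : 0 ≤ zbar) (hzlow : zlow ≤ 0)
    (hz₁ : ∀ r, r ≤ σ₁ → zstar r = zbar)
    (hz₂ : ∀ r, σ₁ < r → r < σ₂ → zstar r = σ₂ - r)
    (hz₃ : ∀ r, σ₂ ≤ r → r ≤ σ₃ → zstar r = 0)
    (hz₄ : ∀ r, σ₃ < r → r < σ₄ → zstar r = σ₃ - r)
    (hz₅ : ∀ r, σ₄ ≤ r → zstar r = zlow) (r : ℝ) :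
    zstar r = clampIcc zlow zbar (deadBandNetDemand σ₂ σ₃ r) := by
  have hlb : zlow ≤ zbar := hzlow.trans hzbar
  subst hσ₁ hσ₄
  rcases le_or_gt r (σ₂ - zbar) with h₁ | h₁
  · rw [hz₁ r h₁, deadBandNetDemand_of_le_left hσ₂₃ (by linarith),
      clampIcc_of_right_le hlb (by linarith)]
  rcases lt_or_ge r σ₂ with h₂ | h₂
  · rw [hz₂ r h₁ h₂, deadBandNetDemand_of_le_left hσ₂₃ h₂.le,
      clampIcc_of_mem_Icc (by linarith) (by linarith)]
  rcases le_or_gt r σ₃ with h₃ | h₃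
  · rw [hz₃ r h₂ h₃, deadBandNetDemand_of_mem_Icc h₂ h₃, clampIcc_of_mem_Icc hzlow hzbar]
  rcases lt_or_ge r (σ₃ - zlow) with h₄ | h₄
  · rw [hz₄ r h₃ h₄, deadBandNetDemand_of_right_le hσ₂₃ h₃.le,
      clampIcc_of_mem_Icc (by linarith) (by linarith)]
  · rw [hz₅ r h₄, deadBandNetDemand_of_right_le hσ₂₃ h₃.le,
      clampIcc_of_le_left hlb (by linarith)]

/-- Monotonicity and envelope-feasibility of the optimal aggregate net
consumption `z*` of the four-threshold policy (equation (16)): `z*` is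
nonincreasing in aggregate renewables and stays within `[z̲, z̄]`. -/
theorem stmt_12 (D : ℝ → ℝ) (πp πm σ1 σ2 σ3 σ4 zbar zlow : ℝ)
    (zstar : ℝ → ℝ)
    (hD : StrictAnti D)
    (hσ2 : σ2 = D πp) (hσ3 : σ3 = D πm)
    (hσ1 : σ1 = σ2 - zbar) (hσ4 : σ4 = σ3 - zlow)
    (hzbar : 0 ≤ zbar) (hzlow : zlow ≤ 0) (hπ : πm ≤ πp)
    (hz1 : ∀ r : ℝ, r ≤ σ1 → zstar r = zbar)
    (hz2 : ∀ r : ℝ, σ1 < r → r < σ2 → zstar r = D πp - r)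
    (hz3 : ∀ r : ℝ, σ2 ≤ r → r ≤ σ3 → zstar r = 0)
    (hz4 : ∀ r : ℝ, σ3 < r → r < σ4 → zstar r = D πm - r)
    (hz5 : ∀ r : ℝ, σ4 ≤ r → zstar r = zlow) :
    Antitone zstar ∧ ∀ r : ℝ, zlow ≤ zstar r ∧ zstar r ≤ zbar := by
  have hσ23 : σ2 ≤ σ3 := by rw [hσ2, hσ3]; exact hD.antitone hπ
  rw [← hσ2] at hz2
  rw [← hσ3] at hz4
  have hzstar : zstar = clampIcc zlow zbar ∘ deadBandNetDemand σ2 σ3 :=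
    funext (eq_clampIcc_deadBandNetDemand hσ23 hσ1 hσ4 hzbar hzlow hz1 hz2 hz3 hz4 hz5)
  subst hzstar
  exact ⟨(monotone_clampIcc _ _).comp_antitone (antitone_deadBandNetDemand _ _),
    fun r => clampIcc_mem_Icc (hzlow.trans hzbar) _⟩
end

section
/- Let π⁻ ≤ π ≤ π⁺ with π⁻, π ≥ 0, and let U be concave differentiable with derivative L. Let d_π satisfy L(d_π) = π and d_μ = r + z̲ with z̲ ≤ 0 (benchmark export-envelope-binding consumption, r large). If d_π < d_μ, then U(d_π) - π·(d_π - r) - U(d_μ) + π⁻·z̲ ≥ (π⁻ - π)·z̲ ≥ 0. -/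
theorem ConcaveOn.le_add_mul_sub_of_hasDerivAt {S : Set ℝ} {f : ℝ → ℝ} {f' x y : ℝ}
    (hf : ConcaveOn ℝ S f) (hx : x ∈ S) (hy : y ∈ S) (hf' : HasDerivAt f f' x) :
    f y ≤ f x + f' * (y - x) := by
  rcases lt_trichotomy x y with hxy | rfl | hyx
  · have hslope := hf.slope_le_of_hasDerivAt hx hy hxy hf'
    rw [slope_def_field, div_le_iff₀ (sub_pos.2 hxy)] at hslope
    linarith
  · simp
  · have hslope := hf.le_slope_of_hasDerivAt hy hx hyx hf'
    rw [slope_def_field, le_div_iff₀ (sub_pos.2 hyx)] at hslope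
    linarith

theorem stmt_15_general (U L : ℝ → ℝ) (πm π r zlow dπ dμ : ℝ)
    (hU : ConcaveOn ℝ Set.univ U)
    (hL : ∀ x : ℝ, HasDerivAt U (L x) x)
    (hπ1 : πm ≤ π)
    (hdπ : L dπ = π)
    (hdμ : dμ = r + zlow) (hzlow : zlow ≤ 0) :
    U dπ - π * (dπ - r) - U dμ + πm * zlow ≥ (πm - π) * zlow ∧
    (πm - π) * zlow ≥ 0 := by
  have tangent : U dμ ≤ U dπ + π * (dμ - dπ) :=
    hdπ ▸ hU.le_add_mul_sub_of_hasDerivAt trivial trivial (hL dπ)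
  subst hdμ
  exact ⟨by linarith, mul_nonneg_of_nonpos_of_nonpos (by linarith) hzlow⟩

/-- Individual rationality, Case 14: with `0 ≤ π⁻ ≤ π ≤ π⁺`, concave
differentiable `U` (derivative `L`), `L d_π = π`, `d_μ = r + z̲` with `z̲ ≤ 0`,
and `d_π < d_μ`, the member's community surplus exceeds the benchmark
export-envelope-binding surplus by at least `(π⁻ - π) z̲ ≥ 0`. -/
theorem stmt_15 (U L : ℝ → ℝ) (πp πm π r zlow dπ dμ : ℝ)
    (hU : ConcaveOn ℝ Set.univ U)
    (hL : ∀ x : ℝ, HasDerivAt U (L x) x)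
    (hπm0 : 0 ≤ πm) (hπ1 : πm ≤ π) (hπ2 : π ≤ πp)
    (hdπ : L dπ = π)
    (hdμ : dμ = r + zlow) (hzlow : zlow ≤ 0)
    (hlt : dπ < dμ) :
    U dπ - π * (dπ - r) - U dμ + πm * zlow ≥ (πm - π) * zlow ∧
    (πm - π) * zlow ≥ 0 :=
  stmt_15_general U L πm π r zlow dπ dμ hU hL hπ1 hdπ hdμ hzlow
end
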